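/- Define for β₁ ∈ (1, √2) the function F(β₁) := E(κ(β₁)) + (β₁² - 2) K(κ(β₁)), where κ(β₁) = √(2(β₁²-1))/β₁. Then F(β₁) > 0 for all β₁ ∈ (1, √2). -/

import Mathlib

/-!
With `k = κ(β₁)` one has `k² β₁² = 2(β₁² - 1)`, hence
`2 F(β₁) = β₁² ((2 - k²) E(k) - 2 (1 - k²) K(k))`. Writing `Δ = √(1 - k² sin² θ)`,
`(2 - k²) Δ - 2 (1 - k²) / Δ = (k² sin θ cos θ Δ)' + 3 k⁴ sin² θ cos² θ / Δ`,
and the exact derivative integrates to zero over `[0, π/2]`, so `(2 - k²) E - 2 (1 - k²) K` is the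
integral of a positive function.
-/

open Real Set intervalIntegral

noncomputable def K (k : ℝ) : ℝ :=
  ∫ θ in (0:ℝ)..(Real.pi/2), 1 / Real.sqrt (1 - k^2 * Real.sin θ ^ 2)

noncomputable def E (k : ℝ) : ℝ :=
  ∫ θ in (0:ℝ)..(Real.pi/2), Real.sqrt (1 - k^2 * Real.sin θ ^ 2)

noncomputable def ellipticDelta (k θ : ℝ) : ℝ := √(1 - k ^ 2 * sin θ ^ 2)

section ellipticDelta

variable {k : ℝ}

lemma continuous_ellipticDelta (k : ℝ) : Continuous (ellipticDelta k) := by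
  unfold ellipticDelta
  fun_prop

lemma one_sub_sq_mul_sin_sq_pos (hk : k ^ 2 < 1) (θ : ℝ) : 0 < 1 - k ^ 2 * sin θ ^ 2 := by
  nlinarith [sin_sq_le_one θ, sq_nonneg (sin θ), sq_nonneg k]

lemma ellipticDelta_pos (hk : k ^ 2 < 1) (θ : ℝ) : 0 < ellipticDelta k θ :=
  sqrt_pos.mpr (one_sub_sq_mul_sin_sq_pos hk θ)

lemma intervalIntegrable_div_ellipticDelta (hk : k ^ 2 < 1) {f : ℝ → ℝ} (hf : Continuous f)
    (a b : ℝ) : IntervalIntegrable (fun θ => f θ / ellipticDelta k θ) MeasureTheory.volume a b :=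
  (hf.div (continuous_ellipticDelta k) fun θ => (ellipticDelta_pos hk θ).ne').intervalIntegrable _ _

lemma hasDerivAt_ellipticDelta {θ : ℝ} (h : 0 < 1 - k ^ 2 * sin θ ^ 2) :
    HasDerivAt (ellipticDelta k) (-(k ^ 2 * sin θ * cos θ) / ellipticDelta k θ) θ := by
  have hu : HasDerivAt (fun t => 1 - k ^ 2 * sin t ^ 2) (-(k ^ 2 * (2 * sin θ * cos θ))) θ := by
    simpa using (((hasDerivAt_sin θ).pow 2).const_mul (k ^ 2)).const_sub 1
  refine (hu.sqrt h.ne').congr_deriv ?_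
  rw [ellipticDelta]
  field_simp

lemma hasDerivAt_sq_mul_sin_mul_cos_mul_ellipticDelta {θ : ℝ}
    (h : 0 < 1 - k ^ 2 * sin θ ^ 2) :
    HasDerivAt (fun t => k ^ 2 * (sin t * cos t * ellipticDelta k t))
      ((2 - k ^ 2) * ellipticDelta k θ - 2 * (1 - k ^ 2) / ellipticDelta k θ
        - 3 * k ^ 4 * (sin θ * cos θ) ^ 2 / ellipticDelta k θ) θ := by
  have hΔ : ellipticDelta k θ ^ 2 = 1 - k ^ 2 * sin θ ^ 2 := sq_sqrt h.le
  have hΔ0 : ellipticDelta k θ ≠ 0 := (sqrt_pos.mpr h).ne'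
  refine ((((hasDerivAt_sin θ).fun_mul (hasDerivAt_cos θ)).fun_mul
    (hasDerivAt_ellipticDelta h)).const_mul (k ^ 2)).congr_deriv ?_
  field_simp
  linear_combination (k ^ 2 * (cos θ ^ 2 - sin θ ^ 2) - (2 - k ^ 2)) * hΔ
    + (k ^ 2 + k ^ 4 * sin θ ^ 2) * sin_sq_add_cos_sq θ

lemma two_sub_sq_mul_E_sub_eq_integral (hk : k ^ 2 < 1) :
    (2 - k ^ 2) * E k - 2 * (1 - k ^ 2) * K k =
      ∫ θ in 0..π / 2, 3 * k ^ 4 * (sin θ * cos θ) ^ 2 / ellipticDelta k θ := by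
  have hE : IntervalIntegrable (ellipticDelta k) MeasureTheory.volume 0 (π / 2) :=
    (continuous_ellipticDelta k).intervalIntegrable _ _
  have hK := intervalIntegrable_div_ellipticDelta hk
    (continuous_const (y := 2 * (1 - k ^ 2))) 0 (π / 2)
  have hR := intervalIntegrable_div_ellipticDelta hk
    (by fun_prop : Continuous fun θ => 3 * k ^ 4 * (sin θ * cos θ) ^ 2) 0 (π / 2)
  have hFTC : ∫ θ in 0..π / 2, ((2 - k ^ 2) * ellipticDelta k θ
      - 2 * (1 - k ^ 2) / ellipticDelta k θ - 3 * k ^ 4 * (sin θ * cos θ) ^ 2 / ellipticDelta k θ)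
      = 0 := by
    rw [integral_eq_sub_of_hasDerivAt (fun θ _ =>
      hasDerivAt_sq_mul_sin_mul_cos_mul_ellipticDelta (one_sub_sq_mul_sin_sq_pos hk θ))
      (((hE.const_mul (2 - k ^ 2)).sub hK).sub hR)]
    simp
  have hK_eq : ∫ θ in 0..π / 2, 2 * (1 - k ^ 2) / ellipticDelta k θ = 2 * (1 - k ^ 2) * K k := by
    simp only [K, ← integral_const_mul, mul_one_div]
    rfl
  rw [integral_sub ((hE.const_mul _).sub hK) hR, integral_sub (hE.const_mul _) hK,
    integral_const_mul, hK_eq] at hFTC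
  change (2 - k ^ 2) * E k - 2 * (1 - k ^ 2) * K k - _ = 0 at hFTC
  linarith

lemma two_mul_one_sub_sq_mul_K_lt_two_sub_sq_mul_E (hk0 : k ≠ 0) (hk1 : k ^ 2 < 1) :
    2 * (1 - k ^ 2) * K k < (2 - k ^ 2) * E k := by
  have hpos : 0 < ∫ θ in 0..π / 2, 3 * k ^ 4 * (sin θ * cos θ) ^ 2 / ellipticDelta k θ := by
    refine intervalIntegral_pos_of_pos_on (intervalIntegrable_div_ellipticDelta hk1
      (by fun_prop) _ _) (fun θ hθ => ?_) (by positivity)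
    have hsin : 0 < sin θ := sin_pos_of_pos_of_lt_pi hθ.1 (by linarith [hθ.2, pi_pos])
    have hcos : 0 < cos θ := cos_pos_of_mem_Ioo ⟨by linarith [hθ.1, pi_pos], hθ.2⟩
    have := ellipticDelta_pos hk1 θ
    positivity
  linarith [two_sub_sq_mul_E_sub_eq_integral hk1]

end ellipticDelta

theorem F_pos (β₁ : ℝ) (hβ₁ : β₁ ∈ Set.Ioo (1:ℝ) (Real.sqrt 2)) :
    0 < E (Real.sqrt (2 * (β₁^2 - 1)) / β₁) +
        (β₁^2 - 2) * K (Real.sqrt (2 * (β₁^2 - 1)) / β₁) := by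
  obtain ⟨hβ_gt, hβ_lt⟩ := hβ₁
  have hβ_pos : 0 < β₁ := by linarith
  have hβ_sq_gt : 1 < β₁ ^ 2 := by nlinarith
  have hβ_sq_lt : β₁ ^ 2 < 2 := by
    nlinarith [sq_sqrt (show (0:ℝ) ≤ 2 by norm_num), sqrt_nonneg 2]
  set k := √(2 * (β₁ ^ 2 - 1)) / β₁
  have hk_sq : k ^ 2 * β₁ ^ 2 = 2 * (β₁ ^ 2 - 1) := by
    rw [div_pow, sq_sqrt (by linarith)]
    field_simp
  have hk0 : k ≠ 0 := by
    rintro hk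
    rw [hk] at hk_sq
    nlinarith
  have hk1 : k ^ 2 < 1 := by nlinarith
  have hF : 2 * (E k + (β₁ ^ 2 - 2) * K k)
      = β₁ ^ 2 * ((2 - k ^ 2) * E k - 2 * (1 - k ^ 2) * K k) := by
    linear_combination (E k - 2 * K k) * hk_sq
  have hgap := two_mul_one_sub_sq_mul_K_lt_two_sub_sq_mul_E hk0 hk1
  linarith [mul_pos (pow_pos hβ_pos 2) (sub_pos.mpr hgap)]
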